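/- Let L be a symmetric real n×n matrix with orthonormal eigenbasis v₁,…,vₙ and eigenvalues satisfying λ_i < 0 for i ≥ 2 and λ₁ = 0, and let ζ ∈ ℝⁿ satisfy v₁ᵀζ = 0. Then the improper integral ∫₀^∞ exp(Ls) ζζᵀ exp(Ls) ds converges and equals Σ_{i=2}^n Σ_{j=2}^n (-1/(λ_i+λ_j)) (v_iᵀζ)(ζᵀv_j) v_i v_jᵀ. -/

import Mathlib

open Matrix MeasureTheory

/-!
Expanding `ζ` in the eigenbasis gives `exp (s • L) *ᵥ ζ = ∑_{i ≠ 0} (vᵢ ⬝ᵥ ζ) e^{λᵢ s} vᵢ`, the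
`v₀`-component being zero. As `exp (s • L)` is symmetric, the integrand is the outer product of
this vector with itself, a finite combination of the decaying exponentials `e^{(λᵢ + λⱼ) s}`,
each of which integrates over `(0, ∞)` to `-1 / (λᵢ + λⱼ)`.
-/

section
variable {l m n R : Type*} [Fintype m] [CommRing R]

theorem Matrix.mul_vecMulVec_mul (M : Matrix l m R) (N : Matrix m n R) (x y : m → R) :
    M * vecMulVec x y * N = vecMulVec (M *ᵥ x) (Nᵀ *ᵥ y) := by
  rw [mul_vecMulVec, vecMulVec_mul, mulVec_transpose]

variable [DecidableEq m]

theorem sum_dotProduct_smul_eq_of_orthonormal {v : m → m → R}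
    (horth : ∀ i j, v i ⬝ᵥ v j = if i = j then 1 else 0) (x : m → R) :
    ∑ i, (v i ⬝ᵥ x) • v i = x := by
  have hP : of v * (of v)ᵀ = 1 := by
    ext i j
    simpa [mul_apply, one_apply, dotProduct] using horth i j
  calc ∑ i, (v i ⬝ᵥ x) • v i = (of v *ᵥ x) ᵥ* of v := (vecMul_eq_sum _ _).symm
    _ = ((of v)ᵀ * of v) *ᵥ x := by rw [← mulVec_transpose, mulVec_mulVec]
    _ = x := by rw [mul_eq_one_comm.mp hP, one_mulVec]

end

section
-- `NormedSpace.exp` depends only on the topology; any normed algebra structure on matrices will do.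
attribute [local instance] Matrix.linftyOpNormedRing Matrix.linftyOpNormedAlgebra
variable {m : Type*} [Fintype m] [DecidableEq m]

theorem Matrix.exp_mulVec_of_mulVec_eq_smul {A : Matrix m m ℝ} {w : m → ℝ} {μ : ℝ}
    (h : A *ᵥ w = μ • w) : NormedSpace.exp A *ᵥ w = Real.exp μ • w := by
  have hpow (k : ℕ) : A ^ k *ᵥ w = μ ^ k • w := by
    induction k with
    | zero => simp
    | succ k ih => rw [pow_succ', ← mulVec_mulVec, ih, mulVec_smul, h, smul_smul, pow_succ]
  let applyW : Matrix m m ℝ →L[ℝ] m → ℝ :=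
    LinearMap.toContinuousLinearMap ((LinearMap.applyₗ w).comp toLin'.toLinearMap)
  have hA := (NormedSpace.exp_series_hasSum_exp' (𝕂 := ℝ) A).mapL applyW
  have hμ := (NormedSpace.exp_series_hasSum_exp' (𝕂 := ℝ) μ).smul_const w
  refine hA.unique ?_
  convert hμ using 1
  · ext k : 1
    change ((k.factorial : ℝ)⁻¹ • A ^ k) *ᵥ w = _
    rw [smul_mulVec, hpow, smul_smul, smul_eq_mul]
  · rw [Real.exp_eq_exp_ℝ]

theorem Matrix.exp_smul_mulVec_eq_sum {L : Matrix m m ℝ} {lam : m → ℝ} {v : m → m → ℝ}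
    (heig : ∀ i, L *ᵥ v i = lam i • v i)
    (horth : ∀ i j, v i ⬝ᵥ v j = if i = j then 1 else 0) (s : ℝ) (x : m → ℝ) :
    NormedSpace.exp (s • L) *ᵥ x = ∑ i, ((v i ⬝ᵥ x) * Real.exp (lam i * s)) • v i := by
  conv_lhs => rw [← sum_dotProduct_smul_eq_of_orthonormal horth x]
  rw [mulVec_sum]
  refine Finset.sum_congr rfl fun i _ => ?_
  have hsL : (s • L) *ᵥ v i = (lam i * s) • v i := by
    rw [smul_mulVec, heig, smul_smul, mul_comm]
  rw [mulVec_smul, exp_mulVec_of_mulVec_eq_smul hsL, smul_smul]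

end

theorem integrableOn_Ioi_sum_mul_exp {ι : Type*} (T : Finset ι) (k r : ι → ℝ)
    (hr : ∀ t ∈ T, r t < 0) :
    IntegrableOn (fun s => ∑ t ∈ T, k t * Real.exp (r t * s)) (Set.Ioi 0) :=
  integrable_finsetSum _ fun t ht => (integrableOn_exp_mul_Ioi (hr t ht) 0).const_mul (k t)

theorem integral_Ioi_sum_mul_exp {ι : Type*} (T : Finset ι) (k r : ι → ℝ)
    (hr : ∀ t ∈ T, r t < 0) :
    ∫ s in Set.Ioi 0, ∑ t ∈ T, k t * Real.exp (r t * s) = ∑ t ∈ T, -k t / r t := by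
  rw [integral_finsetSum _ fun t ht => (integrableOn_exp_mul_Ioi (hr t ht) 0).const_mul (k t)]
  refine Finset.sum_congr rfl fun t ht => ?_
  rw [integral_const_mul, integral_exp_mul_Ioi (hr t ht), mul_zero, Real.exp_zero]
  ring

theorem stmt_5_general (n : ℕ) [NeZero n] (L : Matrix (Fin n) (Fin n) ℝ) (hsym : L.IsSymm)
    (lam : Fin n → ℝ) (v : Fin n → Fin n → ℝ)
    (heig : ∀ i, L.mulVec (v i) = lam i • v i)
    (horth : ∀ i j, v i ⬝ᵥ v j = if i = j then 1 else 0)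
    (hlamneg : ∀ i, i ≠ 0 → lam i < 0)
    (ζ : Fin n → ℝ) (hζ : v 0 ⬝ᵥ ζ = 0) :
    (∀ a b, MeasureTheory.IntegrableOn
        (fun s : ℝ => (NormedSpace.exp (s • L) * Matrix.vecMulVec ζ ζ *
          NormedSpace.exp (s • L)) a b) (Set.Ioi 0)) ∧
    (∀ a b,
      (∫ s in Set.Ioi (0:ℝ),
        (NormedSpace.exp (s • L) * Matrix.vecMulVec ζ ζ * NormedSpace.exp (s • L)) a b)
      = (∑ i ∈ Finset.univ.filter (fun i : Fin n => i ≠ 0),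
          ∑ j ∈ Finset.univ.filter (fun j : Fin n => j ≠ 0),
            ((-1) / (lam i + lam j) * (v i ⬝ᵥ ζ) * (ζ ⬝ᵥ v j)) •
              Matrix.vecMulVec (v i) (v j)) a b) := by
  set S := Finset.univ.filter (fun i : Fin n => i ≠ 0)
  have hneg : ∀ p ∈ S ×ˢ S, lam p.1 + lam p.2 < 0 := by
    simp only [S, Finset.mem_product, Finset.mem_filter, Finset.mem_univ, true_and]
    exact fun p ⟨h1, h2⟩ => add_neg (hlamneg _ h1) (hlamneg _ h2)
  have hker (s : ℝ) :
      NormedSpace.exp (s • L) *ᵥ ζ = ∑ i ∈ S, ((v i ⬝ᵥ ζ) * Real.exp (lam i * s)) • v i := by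
    rw [exp_smul_mulVec_eq_sum heig horth, Finset.sum_filter_of_ne]
    rintro i - hi rfl
    simp [hζ] at hi
  have hentry (a b : Fin n) (s : ℝ) :
      (NormedSpace.exp (s • L) * vecMulVec ζ ζ * NormedSpace.exp (s • L)) a b =
        ∑ p ∈ S ×ˢ S, ((v p.1 ⬝ᵥ ζ) * (v p.2 ⬝ᵥ ζ) * (v p.1 a * v p.2 b)) *
          Real.exp ((lam p.1 + lam p.2) * s) := by
    rw [mul_vecMulVec_mul, ((hsym.smul s).exp).eq, hker, Finset.sum_product, vecMulVec_apply,
      Finset.sum_apply, Finset.sum_apply, Finset.sum_mul_sum]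
    refine Finset.sum_congr rfl fun i _ => Finset.sum_congr rfl fun j _ => ?_
    simp only [Pi.smul_apply, smul_eq_mul, add_mul, Real.exp_add]
    ring
  refine ⟨fun a b => ?_, fun a b => ?_⟩
  · simpa only [hentry] using integrableOn_Ioi_sum_mul_exp _ _ _ hneg
  · simp only [hentry]
    rw [integral_Ioi_sum_mul_exp _ _ _ hneg, Finset.sum_product]
    simp only [Matrix.sum_apply, Matrix.smul_apply, vecMulVec_apply, smul_eq_mul, dotProduct_comm ζ]
    refine Finset.sum_congr rfl fun i _ => Finset.sum_congr rfl fun j _ => ?_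
    ring

theorem stmt_5 (n : ℕ) [NeZero n] (L : Matrix (Fin n) (Fin n) ℝ) (hsym : L.IsSymm)
    (lam : Fin n → ℝ) (v : Fin n → Fin n → ℝ)
    (heig : ∀ i, L.mulVec (v i) = lam i • v i)
    (horth : ∀ i j, v i ⬝ᵥ v j = if i = j then 1 else 0)
    (hlam0 : lam 0 = 0) (hv0 : ∀ l, v 0 l = 1 / Real.sqrt n)
    (hlamneg : ∀ i, i ≠ 0 → lam i < 0)
    (ζ : Fin n → ℝ) (hζ : v 0 ⬝ᵥ ζ = 0) :
    (∀ a b, MeasureTheory.IntegrableOn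
        (fun s : ℝ => (NormedSpace.exp (s • L) * Matrix.vecMulVec ζ ζ *
          NormedSpace.exp (s • L)) a b) (Set.Ioi 0)) ∧
    (∀ a b,
      (∫ s in Set.Ioi (0:ℝ),
        (NormedSpace.exp (s • L) * Matrix.vecMulVec ζ ζ * NormedSpace.exp (s • L)) a b)
      = (∑ i ∈ Finset.univ.filter (fun i : Fin n => i ≠ 0),
          ∑ j ∈ Finset.univ.filter (fun j : Fin n => j ≠ 0),
            ((-1) / (lam i + lam j) * (v i ⬝ᵥ ζ) * (ζ ⬝ᵥ v j)) •
              Matrix.vecMulVec (v i) (v j)) a b) :=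
  stmt_5_general n L hsym lam v heig horth hlamneg ζ hζ
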